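/- Let S ⋈ G be a terminating ordered join and σ : S → S a weakly order-preserving involution such that Γ₁(G_i) = Γ₁(G_{σ(i)}) for all i and the fixed-point set S^σ of σ is a lower set of S. Then Γ₀(S ⋈ G) = Γ₀(S^σ ⋈ G), the ordered join restricted to the fixed points. -/

import Mathlib

/-! The combinatorial game theory of the older Mathlib (`SetTheory.PGame`, `Nimber`,
`SetTheory.PGame.Impartial`, `SetTheory.PGame.grundyValue`) has been removed from Mathlib;
it is reconstructed here with its old meaning. -/

universe u

/-- Nimbers: a type synonym of `Ordinal` (only equality of nimbers is used below). -/
def Nimber : Type (u + 1) := Ordinal.{u}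

namespace Nimber

/-- The identity map from ordinals to nimbers. -/
def ofOrdinal (o : Ordinal.{u}) : Nimber.{u} := o

/-- The identity map from nimbers to ordinals. -/
def toOrdinal (a : Nimber.{u}) : Ordinal.{u} := a

end Nimber

namespace SetTheory

/-- Pre-games, as in the older Mathlib. -/
inductive PGame : Type (u + 1)
  | mk : ∀ α β : Type u, (α → PGame) → (β → PGame) → PGame

namespace PGame

/-- The type of left moves. -/
def LeftMoves : PGame.{u} → Type u
  | mk l _ _ _ => l

/-- The type of right moves. -/
def RightMoves : PGame.{u} → Type u
  | mk _ r _ _ => r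

/-- The left options. -/
def moveLeft : ∀ g : PGame.{u}, LeftMoves g → PGame.{u}
  | mk _ _ L _ => L

/-- The right options. -/
def moveRight : ∀ g : PGame.{u}, RightMoves g → PGame.{u}
  | mk _ _ _ R => R

/-- The game with no moves. -/
instance : Zero PGame.{u} :=
  ⟨⟨PEmpty, PEmpty, PEmpty.elim, PEmpty.elim⟩⟩

/-- Negation of pre-games. -/
def neg : PGame.{u} → PGame.{u}
  | ⟨l, r, L, R⟩ => ⟨r, l, fun i => neg (R i), fun i => neg (L i)⟩

instance : Neg PGame.{u} :=
  ⟨neg⟩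

/-- The pair `(x ≤ y, x ⧏ y)`, defined by simultaneous recursion as in the older Mathlib:
`x ≤ y ↔ (∀ i, xL i ⧏ y) ∧ (∀ j, x ⧏ yR j)` and `x ⧏ y ↔ (∃ i, x ≤ yL i) ∨ (∃ j, xR j ≤ y)`. -/
noncomputable def leLF : PGame.{u} → PGame.{u} → Prop × Prop :=
  fun x => PGame.rec (motive := fun _ => PGame.{u} → Prop × Prop)
    (fun xl xr xL xR IHl IHr => fun y =>
      PGame.rec (motive := fun _ => Prop × Prop)
        (fun yl yr yL yR JHl JHr =>
          ((∀ i : xl, (IHl i (mk yl yr yL yR)).2) ∧ ∀ j : yr, (JHr j).2,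
            (∃ i : yl, (JHl i).1) ∨ ∃ j : xr, (IHr j (mk yl yr yL yR)).1))
        y)
    x

/-- The less or equal relation on pre-games. -/
instance : LE PGame.{u} :=
  ⟨fun x y => (leLF x y).1⟩

/-- Equivalence of pre-games: `x ≤ y ∧ y ≤ x`. -/
def Equiv (x y : PGame.{u}) : Prop :=
  x ≤ y ∧ y ≤ x

instance : HasEquiv PGame.{u} :=
  ⟨Equiv⟩

/-- Auxiliary definition of impartiality. -/
def ImpartialAux : PGame.{u} → Prop
  | mk l r L R => (mk l r L R ≈ -mk l r L R) ∧ (∀ i : l, ImpartialAux (L i)) ∧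
      ∀ j : r, ImpartialAux (R j)

/-- A pre-game is impartial if it is equivalent to its negative, and so are all its options,
recursively. -/
class Impartial (G : PGame.{u}) : Prop where
  out : ImpartialAux G

/-- The Grundy value of a pre-game: the least ordinal (as a nimber) not among the Grundy values
of its left options. -/
noncomputable def grundyValue : PGame.{u} → Nimber.{u}
  | mk _ _ L _ => Nimber.ofOrdinal (sInf (Set.range fun i => Nimber.toOrdinal (grundyValue (L i)))ᶜ)

end PGame

end SetTheory

open SetTheory PGame Nimber

noncomputable section
open Classical in
/-- The state resulting from a (Left) move in component `i₀` of an ordered join: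
all components strictly above `i₀` are replaced by the empty game `0`. -/
def ojNextL {S : Type} [PartialOrder S] (x : S → PGame) (i₀ : S) (j : (x i₀).LeftMoves) :
    S → PGame :=
  fun i => if i = i₀ then (x i₀).moveLeft j else if i₀ < i then 0 else x i

open Classical in
def ojNextR {S : Type} [PartialOrder S] (x : S → PGame) (i₀ : S) (j : (x i₀).RightMoves) :
    S → PGame :=
  fun i => if i = i₀ then (x i₀).moveRight j else if i₀ < i then 0 else x i

/-- The move relation of the ordered join: `OJRel y x` iff `y` results from `x` by a single move. -/
def OJRel {S : Type} [PartialOrder S] (y x : S → PGame) : Prop :=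
  (∃ i₀ j, y = ojNextL x i₀ j) ∨ (∃ i₀ j, y = ojNextR x i₀ j)

theorem ojrel_L {S : Type} [PartialOrder S] (x : S → PGame) (i₀ : S) (j : (x i₀).LeftMoves) :
    OJRel (ojNextL x i₀ j) x := Or.inl ⟨i₀, j, rfl⟩

theorem ojrel_R {S : Type} [PartialOrder S] (x : S → PGame) (i₀ : S) (j : (x i₀).RightMoves) :
    OJRel (ojNextR x i₀ j) x := Or.inr ⟨i₀, j, rfl⟩

/-- The ordered join of a family of games, as a game, given a termination certificate. -/
def ojoinAcc {S : Type} [PartialOrder S] : ∀ x : S → PGame, Acc OJRel x → PGame := fun x h =>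
  Acc.rec (motive := fun x _ => PGame)
    (fun x _ ih =>
      PGame.mk (Σ i₀ : S, (x i₀).LeftMoves) (Σ i₀ : S, (x i₀).RightMoves)
        (fun p => ih _ (ojrel_L x p.1 p.2))
        (fun p => ih _ (ojrel_R x p.1 p.2))) h

open Classical in
/-- The ordered join `S ⋈ G` of a family of games `G` over the poset `S`.
(Defined as `0` in the degenerate non-terminating case.) -/
def ojoin {S : Type} [PartialOrder S] (x : S → PGame) : PGame :=
  if h : Acc OJRel x then ojoinAcc x h else 0

/-- The Grundy set `Γ₁(G)`: the set of Grundy numbers of the options of `G`. -/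
def grundySet (G : PGame) : Set Nimber :=
  Set.range fun i => grundyValue (G.moveLeft i)
end

/-- An involution `σ` of a poset is weakly order-preserving if for each `i` the upper set
`{ j | i < j ∨ σ i < j }` is `σ`-invariant. -/
def WeaklyOrderPreserving {S : Type} [PartialOrder S] (σ : S → S) : Prop :=
  ∀ i : S, σ '' {j | i < j ∨ σ i < j} = {j | i < j ∨ σ i < j}

/-! Mirror strategy. Call a position balanced if each pair `{i, σ i}` either has equal Grundy sets,
or has equal Grundy values with every component above the pair empty. A move at a fixed point of a
balanced position keeps it balanced and is also a move of `S^σ ⋈ G`. A move at some `i ≠ σ i` can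
be answered, either by a move of the same Grundy value at `σ i` or, if the pair had equal Grundy
values, by a move back to the old Grundy value at `i`, so that the position is balanced again and
its restriction to `S^σ` is unchanged (fixed points lie outside the upper set of a non-fixed pair,
since `S^σ` is a lower set). By induction on the game, neither `S ⋈ G` nor `S^σ ⋈ G` has an option
whose Grundy value is that of the other game. -/

noncomputable instance : LinearOrder Nimber := inferInstanceAs (LinearOrder Ordinal)

namespace SetTheory.PGame

theorem ne_zero_of_mem_range_moveLeft {G g : PGame} (hg : g ∈ Set.range G.moveLeft) :
    G ≠ 0 := by
  rintro rfl
  obtain ⟨j, -⟩ := hg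
  exact PEmpty.elim j

theorem grundyValue_notMem_grundySet (G : PGame) : grundyValue G ∉ grundySet G := by
  cases G with
  | mk l r L R =>
    rintro ⟨i, hi⟩
    have hne : (Set.range fun i => toOrdinal (grundyValue (L i)))ᶜ.Nonempty :=
      Set.nonempty_compl.2 fun h => not_surjective_of_ordinal _ (Set.range_eq_univ.1 h)
    exact csInf_mem hne ⟨i, hi⟩

theorem mem_grundySet_of_lt {G : PGame} {o : Nimber} (h : o < grundyValue G) :
    o ∈ grundySet G := by
  cases G with
  | mk l r L R =>
    by_contra hmem
    exact notMem_of_lt_csInf' (s := (Set.range fun i => toOrdinal (grundyValue (L i)))ᶜ) h hmem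

theorem grundyValue_le_of_notMem_grundySet {G : PGame} {o : Nimber} (h : o ∉ grundySet G) :
    grundyValue G ≤ o := by
  cases G with
  | mk l r L R => exact csInf_le' (s := (Set.range fun i => toOrdinal (grundyValue (L i)))ᶜ) h

theorem grundyValue_moveLeft_ne {G : PGame} (i : G.LeftMoves) :
    grundyValue (G.moveLeft i) ≠ grundyValue G :=
  fun h => grundyValue_notMem_grundySet G ⟨i, h⟩

theorem grundyValue_eq_of_notMem_grundySet {G H : PGame} (hG : grundyValue H ∉ grundySet G)
    (hH : grundyValue G ∉ grundySet H) : grundyValue G = grundyValue H :=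
  le_antisymm (grundyValue_le_of_notMem_grundySet hG) (grundyValue_le_of_notMem_grundySet hH)

end SetTheory.PGame

section OrderedJoin

variable {S : Type} [PartialOrder S]

open Classical in
noncomputable def ojUpdate (x : S → PGame) (i₀ : S) (g : PGame) : S → PGame :=
  fun i => if i = i₀ then g else if i₀ < i then 0 else x i

theorem ojNextL_eq_ojUpdate (x : S → PGame) (i₀ : S) (j : (x i₀).LeftMoves) :
    ojNextL x i₀ j = ojUpdate x i₀ ((x i₀).moveLeft j) := rfl

theorem ojNextR_eq_ojUpdate (x : S → PGame) (i₀ : S) (j : (x i₀).RightMoves) :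
    ojNextR x i₀ j = ojUpdate x i₀ ((x i₀).moveRight j) := rfl

theorem ojUpdate_self (x : S → PGame) (i₀ : S) (g : PGame) : ojUpdate x i₀ g i₀ = g :=
  if_pos rfl

theorem ojUpdate_of_lt (x : S → PGame) {i₀ k : S} (g : PGame) (h : i₀ < k) :
    ojUpdate x i₀ g k = 0 := by
  simp [ojUpdate, h.ne', h]

theorem ojUpdate_of_ne_of_not_lt (x : S → PGame) {i₀ k : S} (g : PGame) (hne : k ≠ i₀)
    (hlt : ¬ i₀ < k) : ojUpdate x i₀ g k = x k := by
  simp [ojUpdate, hne, hlt]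

theorem ojUpdate_restrict (p : S → Prop) (x : S → PGame) (i₀ : {i // p i}) (g : PGame) :
    (fun i : {i // p i} => ojUpdate x i₀ g i) = ojUpdate (fun i : {i // p i} => x i) i₀ g := by
  funext i
  simp only [ojUpdate]
  split_ifs <;> simp_all [Subtype.ext_iff]

theorem ojRel_ojUpdate {x : S → PGame} {i₀ : S} {g : PGame}
    (hg : g ∈ Set.range (x i₀).moveLeft) : OJRel (ojUpdate x i₀ g) x := by
  obtain ⟨j, rfl⟩ := hg
  exact ojrel_L x i₀ j

theorem acc_ojRel_restrict (p : S → Prop) {x : S → PGame} (hx : Acc OJRel x) :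
    Acc OJRel (fun i : {i // p i} => x i) := by
  induction hx with
  | intro x _ ih =>
    refine ⟨_, ?_⟩
    rintro _ (⟨i₀, j, rfl⟩ | ⟨i₀, j, rfl⟩)
    · rw [ojNextL_eq_ojUpdate, ← ojUpdate_restrict]
      exact ih _ (ojrel_L x i₀ j)
    · rw [ojNextR_eq_ojUpdate, ← ojUpdate_restrict]
      exact ih _ (ojrel_R x i₀ j)

theorem ojoin_eq_mk {x : S → PGame} (hx : Acc OJRel x) :
    ojoin x = PGame.mk (Σ i₀ : S, (x i₀).LeftMoves) (Σ i₀ : S, (x i₀).RightMoves)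
      (fun p => ojoin (ojNextL x p.1 p.2)) (fun p => ojoin (ojNextR x p.1 p.2)) := by
  cases hx with
  | intro x hx' =>
    simp only [ojoin, dif_pos (Acc.intro x hx'), dif_pos (hx' _ (ojrel_L x _ _)),
      dif_pos (hx' _ (ojrel_R x _ _))]
    rfl

theorem mem_grundySet_ojoin {x : S → PGame} (hx : Acc OJRel x) {o : Nimber} :
    o ∈ grundySet (ojoin x) ↔
      ∃ i₀, ∃ g ∈ Set.range (x i₀).moveLeft, grundyValue (ojoin (ojUpdate x i₀ g)) = o := by
  rw [ojoin_eq_mk hx]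
  constructor
  · rintro ⟨⟨i₀, j⟩, rfl⟩
    exact ⟨i₀, _, ⟨j, rfl⟩, rfl⟩
  · rintro ⟨i₀, _, ⟨j, rfl⟩, rfl⟩
    exact ⟨⟨i₀, j⟩, rfl⟩

end OrderedJoin

section Mirror

variable {S : Type} [PartialOrder S] {σ : S → S}

def pairUpper (σ : S → S) (i : S) : Set S := {j | i < j ∨ σ i < j}

theorem pairUpper_apply (hσ : Function.Involutive σ) (i : S) :
    pairUpper σ (σ i) = pairUpper σ i := by
  ext j
  simp only [pairUpper, Set.mem_ofPred_eq, hσ i, or_comm]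

theorem WeaklyOrderPreserving.apply_mem_pairUpper_iff (hw : WeaklyOrderPreserving σ)
    (hσ : Function.Involutive σ) {i k : S} : σ k ∈ pairUpper σ i ↔ k ∈ pairUpper σ i := by
  have himage : σ '' pairUpper σ i = pairUpper σ i := hw i
  nth_rw 1 [← himage]
  exact hσ.injective.mem_set_image

theorem WeaklyOrderPreserving.not_lt_apply_self (hw : WeaklyOrderPreserving σ)
    (hσ : Function.Involutive σ) (i : S) : ¬ i < σ i := by
  intro h
  have hmem : σ (σ i) ∈ pairUpper σ i := (hw.apply_mem_pairUpper_iff hσ).2 (Or.inl h)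
  rw [hσ i] at hmem
  rcases hmem with h' | h'
  exacts [lt_irrefl i h', lt_asymm h h']

theorem WeaklyOrderPreserving.not_apply_lt_self (hw : WeaklyOrderPreserving σ)
    (hσ : Function.Involutive σ) (i : S) : ¬ σ i < i := by
  simpa only [hσ i] using hw.not_lt_apply_self hσ (σ i)

theorem WeaklyOrderPreserving.self_notMem_pairUpper (hw : WeaklyOrderPreserving σ)
    (hσ : Function.Involutive σ) (i : S) : i ∉ pairUpper σ i := by
  rintro (h | h)
  exacts [lt_irrefl i h, hw.not_apply_lt_self hσ i h]

theorem notMem_pairUpper_of_isLowerSet (hσ : Function.Involutive σ)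
    (hfix : IsLowerSet {i : S | σ i = i}) {i t : S} (hi : σ i ≠ i) (ht : σ t = t) :
    t ∉ pairUpper σ i := by
  rintro (h | h)
  · exact hi (hfix h.le ht)
  · have hσi : σ (σ i) = σ i := hfix h.le ht
    rw [hσ i] at hσi
    exact hi hσi.symm

def MirrorBalanced (σ : S → S) (x : S → PGame) : Prop :=
  ∀ i, grundySet (x i) = grundySet (x (σ i)) ∨
    (grundyValue (x i) = grundyValue (x (σ i)) ∧ ∀ k ∈ pairUpper σ i, x k = 0)

def IsPairMove (σ : S → S) (i₀ : S) (x y : S → PGame) : Prop :=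
  (∀ k ∈ pairUpper σ i₀, y k = 0) ∧ ∀ k ∉ pairUpper σ i₀, k ≠ i₀ → k ≠ σ i₀ → y k = x k

variable {x y : S → PGame} {i₀ : S} {g g' : PGame}

theorem MirrorBalanced.of_isPairMove (hσ : Function.Involutive σ) (hw : WeaklyOrderPreserving σ)
    (hx : MirrorBalanced σ x) (hx₀ : x i₀ ≠ 0) (hy : IsPairMove σ i₀ x y)
    (hg : grundyValue (y i₀) = grundyValue (y (σ i₀))) : MirrorBalanced σ y := by
  have hmem {k : S} := hw.apply_mem_pairUpper_iff hσ (i := i₀) (k := k)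
  intro i
  by_cases hi : i = i₀ ∨ i = σ i₀
  · right
    rcases hi with rfl | rfl
    · exact ⟨hg, hy.1⟩
    · rw [hσ i₀, pairUpper_apply hσ]
      exact ⟨hg.symm, hy.1⟩
  obtain ⟨hi₁, hi₂⟩ := not_or.1 hi
  have hσi₁ : σ i ≠ i₀ := fun h => hi₂ (by rw [← h, hσ i])
  have hσi₂ : σ i ≠ σ i₀ := fun h => hi₁ (hσ.injective h)
  by_cases hU : i ∈ pairUpper σ i₀
  · left
    rw [hy.1 i hU, hy.1 (σ i) (hmem.2 hU)]
  rw [hy.2 i hU hi₁ hi₂, hy.2 (σ i) (mt hmem.1 hU) hσi₁ hσi₂]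
  refine (hx i).imp_right (And.imp_right fun hclear k hk => ?_)
  -- `x i₀ ≠ 0` keeps the pair `i₀, σ i₀` out of the cleared set above `i`
  have hi₀ : i₀ ∉ pairUpper σ i := fun h => hx₀ (hclear i₀ h)
  by_cases hkU : k ∈ pairUpper σ i₀
  · exact hy.1 k hkU
  have hk₁ : k ≠ i₀ := by
    rintro rfl
    exact hi₀ hk
  have hk₂ : k ≠ σ i₀ := by
    rintro rfl
    exact hi₀ ((hw.apply_mem_pairUpper_iff hσ).1 hk)
  rw [hy.2 k hkU hk₁ hk₂]
  exact hclear k hk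

theorem IsPairMove.restrict_eq (hσ : Function.Involutive σ)
    (hfix : IsLowerSet {i : S | σ i = i}) (hi₀ : σ i₀ ≠ i₀) (hy : IsPairMove σ i₀ x y) :
    (fun t : {i // σ i = i} => y t) = fun t : {i // σ i = i} => x t := by
  funext ⟨t, ht⟩
  refine hy.2 t (notMem_pairUpper_of_isLowerSet hσ hfix hi₀ ht) ?_ ?_
  · rintro rfl
    exact hi₀ ht
  · rintro rfl
    rw [hσ i₀] at ht
    exact hi₀ ht.symm

theorem isPairMove_ojUpdate_of_fixed (hs : σ i₀ = i₀) : IsPairMove σ i₀ x (ojUpdate x i₀ g) := by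
  constructor
  · intro k hk
    have hlt : i₀ < k := hk.elim id fun h => hs ▸ h
    exact ojUpdate_of_lt _ _ hlt
  · intro k hk hk₁ _
    exact ojUpdate_of_ne_of_not_lt _ _ hk₁ fun h => hk (Or.inl h)

theorem isPairMove_mirror (hσ : Function.Involutive σ) (hw : WeaklyOrderPreserving σ) :
    IsPairMove σ i₀ x (ojUpdate (ojUpdate x i₀ g) (σ i₀) g') := by
  constructor
  · rintro k (hk | hk)
    · by_cases h : σ i₀ < k
      · exact ojUpdate_of_lt _ _ h
      have hk₂ : k ≠ σ i₀ := by
        rintro rfl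
        exact hw.not_lt_apply_self hσ i₀ hk
      rw [ojUpdate_of_ne_of_not_lt _ _ hk₂ h]
      exact ojUpdate_of_lt _ _ hk
    · exact ojUpdate_of_lt _ _ hk
  · intro k hk hk₁ hk₂
    rw [ojUpdate_of_ne_of_not_lt _ _ hk₂ fun h => hk (Or.inr h),
      ojUpdate_of_ne_of_not_lt _ _ hk₁ fun h => hk (Or.inl h)]

theorem isPairMove_reverse (hσ : Function.Involutive σ) (hw : WeaklyOrderPreserving σ)
    (hclear : ∀ k ∈ pairUpper σ i₀, x k = 0) :
    IsPairMove σ i₀ x (ojUpdate (ojUpdate x i₀ g) i₀ g') := by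
  constructor
  · intro k hk
    by_cases h : i₀ < k
    · exact ojUpdate_of_lt _ _ h
    have hk₁ : k ≠ i₀ := by
      rintro rfl
      exact hw.self_notMem_pairUpper hσ k hk
    rw [ojUpdate_of_ne_of_not_lt _ _ hk₁ h, ojUpdate_of_ne_of_not_lt _ _ hk₁ h]
    exact hclear k hk
  · intro k hk hk₁ _
    have h : ¬ i₀ < k := fun h => hk (Or.inl h)
    rw [ojUpdate_of_ne_of_not_lt _ _ hk₁ h, ojUpdate_of_ne_of_not_lt _ _ hk₁ h]

theorem MirrorBalanced.ojUpdate_of_fixed (hσ : Function.Involutive σ)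
    (hw : WeaklyOrderPreserving σ) (hx : MirrorBalanced σ x) (hs : σ i₀ = i₀)
    (hg : g ∈ Set.range (x i₀).moveLeft) : MirrorBalanced σ (ojUpdate x i₀ g) :=
  hx.of_isPairMove hσ hw (ne_zero_of_mem_range_moveLeft hg) (isPairMove_ojUpdate_of_fixed hs)
    (by rw [hs])

theorem MirrorBalanced.exists_answer (hx : MirrorBalanced σ x)
    (hg : g ∈ Set.range (x i₀).moveLeft) :
    (∃ g' ∈ Set.range (x (σ i₀)).moveLeft, grundyValue g' = grundyValue g) ∨
      (∀ k ∈ pairUpper σ i₀, x k = 0) ∧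
        ∃ g' ∈ Set.range g.moveLeft, grundyValue g' = grundyValue (x (σ i₀)) := by
  obtain ⟨j, rfl⟩ := hg
  rcases hx i₀ with hset | ⟨hgv, hclear⟩
  · obtain ⟨j', hj'⟩ : grundyValue ((x i₀).moveLeft j) ∈ grundySet (x (σ i₀)) :=
      hset ▸ ⟨j, rfl⟩
    exact Or.inl ⟨_, ⟨j', rfl⟩, hj'⟩
  rcases (grundyValue_moveLeft_ne j).lt_or_gt with hlt | hgt
  · obtain ⟨j', hj'⟩ := mem_grundySet_of_lt (hgv ▸ hlt)
    exact Or.inl ⟨_, ⟨j', rfl⟩, hj'⟩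
  · obtain ⟨j₂, hj₂⟩ := mem_grundySet_of_lt hgt
    exact Or.inr ⟨hclear, _, ⟨j₂, rfl⟩, hj₂.trans hgv⟩

theorem MirrorBalanced.exists_reply (hσ : Function.Involutive σ) (hw : WeaklyOrderPreserving σ)
    (hfix : IsLowerSet {i : S | σ i = i}) (hx : MirrorBalanced σ x) (hi₀ : σ i₀ ≠ i₀)
    (hg : g ∈ Set.range (x i₀).moveLeft) :
    ∃ c, ∃ g' ∈ Set.range (ojUpdate x i₀ g c).moveLeft,
      MirrorBalanced σ (ojUpdate (ojUpdate x i₀ g) c g') ∧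
      (fun t : {i // σ i = i} => ojUpdate (ojUpdate x i₀ g) c g' t)
        = fun t : {i // σ i = i} => x t := by
  have hx₀ : x i₀ ≠ 0 := ne_zero_of_mem_range_moveLeft hg
  have hσi₀ : ojUpdate x i₀ g (σ i₀) = x (σ i₀) :=
    ojUpdate_of_ne_of_not_lt _ _ hi₀ (hw.not_lt_apply_self hσ i₀)
  rcases hx.exists_answer hg with ⟨g', hg', hgv⟩ | ⟨hclear, g', hg', hgv⟩
  · have hmove := isPairMove_mirror (x := x) (i₀ := i₀) (g := g) (g' := g') hσ hw
    refine ⟨σ i₀, g', hσi₀ ▸ hg', hx.of_isPairMove hσ hw hx₀ hmove ?_,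
      hmove.restrict_eq hσ hfix hi₀⟩
    rw [ojUpdate_of_ne_of_not_lt _ _ hi₀.symm (hw.not_apply_lt_self hσ i₀), ojUpdate_self,
      ojUpdate_self, hgv]
  · have hmove := isPairMove_reverse (g := g) (g' := g') hσ hw hclear
    refine ⟨i₀, g', (ojUpdate_self x i₀ g).symm ▸ hg', hx.of_isPairMove hσ hw hx₀ hmove ?_,
      hmove.restrict_eq hσ hfix hi₀⟩
    rw [ojUpdate_self, ojUpdate_of_ne_of_not_lt _ _ hi₀ (hw.not_lt_apply_self hσ i₀), hσi₀, hgv]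

theorem MirrorBalanced.grundyValue_ojoin_restrict (hσ : Function.Involutive σ)
    (hw : WeaklyOrderPreserving σ) (hfix : IsLowerSet {i : S | σ i = i}) (hx : Acc OJRel x)
    (hbal : MirrorBalanced σ x) :
    grundyValue (ojoin x) = grundyValue (ojoin fun t : {i // σ i = i} => x t) := by
  induction hx.transGen with
  | intro x _ ih =>
    have hrx := acc_ojRel_restrict (fun i => σ i = i) hx
    have hfixed (i₀ : S) (hs : σ i₀ = i₀) (g : PGame) (hg : g ∈ Set.range (x i₀).moveLeft) :
        grundyValue (ojoin (ojUpdate x i₀ g)) =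
          grundyValue (ojoin (ojUpdate (fun t : {i // σ i = i} => x t) ⟨i₀, hs⟩ g)) := by
      rw [← ojUpdate_restrict]
      exact ih _ (.single (ojRel_ojUpdate hg)) (hx.inv (ojRel_ojUpdate hg))
        (hbal.ojUpdate_of_fixed hσ hw hs hg)
    apply grundyValue_eq_of_notMem_grundySet
    · rw [mem_grundySet_ojoin hx]
      rintro ⟨i₀, g, hg, heq⟩
      by_cases hs : σ i₀ = i₀
      · rw [hfixed i₀ hs g hg] at heq
        exact grundyValue_notMem_grundySet _ ((mem_grundySet_ojoin hrx).2 ⟨⟨i₀, hs⟩, g, hg, heq⟩)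
      · have hy := hx.inv (ojRel_ojUpdate hg)
        obtain ⟨c, g', hg', hbal', hres⟩ := hbal.exists_reply hσ hw hfix hs hg
        have hz := ih _ (.head (ojRel_ojUpdate hg') (.single (ojRel_ojUpdate hg)))
          (hy.inv (ojRel_ojUpdate hg')) hbal'
        rw [hres] at hz
        exact grundyValue_notMem_grundySet _
          ((mem_grundySet_ojoin hy).2 ⟨c, g', hg', hz.trans heq.symm⟩)
    · rw [mem_grundySet_ojoin hrx]
      rintro ⟨⟨i₀, hs⟩, g, hg, heq⟩
      rw [← hfixed i₀ hs g hg] at heq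
      exact grundyValue_notMem_grundySet _ ((mem_grundySet_ojoin hx).2 ⟨i₀, g, hg, heq⟩)

end Mirror

theorem ojoin_symmetry_general {S : Type} [PartialOrder S] (G : S → PGame)
    (hG : Acc OJRel G)
    (σ : S → S) (hinv : σ ∘ σ = id) (hw : WeaklyOrderPreserving σ)
    (hfix : IsLowerSet {i : S | σ i = i})
    (hsym : ∀ i, grundySet (G i) = grundySet (G (σ i))) :
    grundyValue (ojoin G) = grundyValue (ojoin fun i : {i : S // σ i = i} => G i) :=
  MirrorBalanced.grundyValue_ojoin_restrict (congrFun hinv) hw hfix hG fun i => .inl (hsym i)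

/-- mirror symmetry: if `σ` is a weakly order-preserving involution of `S` with
`Γ₁(G i) = Γ₁(G (σ i))` for all `i` whose fixed points form a lower set `S^σ`, then
`Γ₀(S ⋈ G) = Γ₀(S^σ ⋈ G)`. -/
theorem ojoin_symmetry {S : Type} [PartialOrder S] (G : S → PGame)
    (hI : ∀ i, (G i).Impartial) (hG : Acc OJRel G)
    (σ : S → S) (hinv : σ ∘ σ = id) (hw : WeaklyOrderPreserving σ)
    (hfix : IsLowerSet {i : S | σ i = i})
    (hsym : ∀ i, grundySet (G i) = grundySet (G (σ i))) :
    grundyValue (ojoin G) = grundyValue (ojoin fun i : {i : S // σ i = i} => G i) :=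
  ojoin_symmetry_general G hG σ hinv hw hfix hsym
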